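/- arXiv:math/0202152 — 2 statements merged into one kernel-verified Lean document; each statement's English description precedes it below -/
import Mathlib

section
/- Let l ≥ 3. The odd endomorphism D := H_{η₁η₂η₃} = L_{η₂η₃}∘∂_{ξ₁} − L_{η₁η₃}∘∂_{ξ₂} + L_{η₁η₂}∘∂_{ξ₃} of Λ satisfies D ∘ D = 0; equivalently [H_{η₁η₂η₃}, H_{η₁η₂η₃}] = 0. This realizes the first defining relation (of lowest weight −2(ε₁+ε₂+ε₃)) in the presentation of N₊ of the Hamiltonian Lie superalgebra h(0|2l) given in the paper's Table 2.1.2. -/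
/-- The exterior algebra Λ of ℂ^{2l}, with generators indexed by
`Fin l ⊕ Fin l` (left = ξ's, right = η's). -/
noncomputable abbrev Lam (l : ℕ) := ExteriorAlgebra ℂ ((Fin l ⊕ Fin l) → ℂ)

/-- The generator of Λ corresponding to index `a` (image of the standard basis). -/
noncomputable def gen (l : ℕ) (a : Fin l ⊕ Fin l) : Lam l :=
  ExteriorAlgebra.ι ℂ (Pi.single a 1)

/-- The generator ξᵢ. -/
noncomputable def xiv (l : ℕ) (i : Fin l) : Lam l := gen l (Sum.inl i)

/-- The generator ηᵢ. -/
noncomputable def etav (l : ℕ) (i : Fin l) : Lam l := gen l (Sum.inr i)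

/-- L_g : left exterior multiplication by g. -/
noncomputable def Lmul (l : ℕ) (g : Lam l) : Module.End ℂ (Lam l) :=
  LinearMap.mulLeft ℂ g

/-- `IsContraction l a D` says that `D` is the contraction ∂_ζ with the dual of
the generator ζ indexed by `a`: it kills 1, sends the generator indexed by `b`
to δ_{ab}·1, and satisfies ∂(xy) = ∂(x)y + (−1)ᵖ x ∂(y) whenever x is a product
of p generators. -/
def IsContraction (l : ℕ) (a : Fin l ⊕ Fin l) (D : Module.End ℂ (Lam l)) : Prop :=
  D 1 = 0 ∧
  (∀ b, D (gen l b) = if a = b then 1 else 0) ∧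
  (∀ (p : ℕ) (g : Fin p → (Fin l ⊕ Fin l)) (y : Lam l),
    D ((List.ofFn fun k => gen l (g k)).prod * y) =
      D ((List.ofFn fun k => gen l (g k)).prod) * y +
        ((-1 : ℂ) ^ p) • ((List.ofFn fun k => gen l (g k)).prod * D y))

/-- The Hamiltonian vector field H_f = Σᵢ (L_{∂_{ξᵢ}f} ∘ ∂_{ηᵢ} + L_{∂_{ηᵢ}f} ∘ ∂_{ξᵢ}),
realized as an endomorphism of Λ; `pd a` is the contraction operator ∂ with the
generator indexed by `a`. -/
noncomputable def Ham (l : ℕ) (pd : (Fin l ⊕ Fin l) → Module.End ℂ (Lam l))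
    (f : Lam l) : Module.End ℂ (Lam l) :=
  ∑ i : Fin l,
    (Lmul l (pd (Sum.inl i) f) ∘ₗ pd (Sum.inr i) +
     Lmul l (pd (Sum.inr i) f) ∘ₗ pd (Sum.inl i))

section Aux

variable {l : ℕ}

lemma gen_sq (x : Fin l ⊕ Fin l) : gen l x * gen l x = 0 :=
  ExteriorAlgebra.ι_sq_zero _

lemma gen_swap (x y : Fin l ⊕ Fin l) : gen l x * gen l y = -(gen l y * gen l x) :=
  eq_neg_of_add_eq_zero_left (ExteriorAlgebra.ι_add_mul_swap _ _)

lemma gen_sand (x y : Fin l ⊕ Fin l) : gen l x * gen l y * gen l x = 0 := by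
  rw [gen_swap x y, neg_mul, mul_assoc, gen_sq, mul_zero, neg_zero]

lemma quad_zero (w x y z : Fin l ⊕ Fin l) (h : w = y ∨ w = z ∨ x = y ∨ x = z) :
    gen l w * gen l x * (gen l y * gen l z) = 0 := by
  rcases h with rfl | rfl | rfl | rfl
  · rw [← mul_assoc, gen_sand, zero_mul]
  · rw [gen_swap y w, mul_neg, ← mul_assoc, gen_sand, zero_mul, neg_zero]
  · rw [← mul_assoc, mul_assoc (gen l w), gen_sq, mul_zero, zero_mul]
  · rw [gen_swap y x, mul_neg, ← mul_assoc, mul_assoc (gen l w), gen_sq, mul_zero,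
      zero_mul, neg_zero]

lemma quadz (j k j' k' : Fin l) (h : j = j' ∨ j = k' ∨ k = j' ∨ k = k') (v : Lam l) :
    etav l j * etav l k * (etav l j' * etav l k' * v) = 0 := by
  have hh : (Sum.inr j : Fin l ⊕ Fin l) = Sum.inr j' ∨ (Sum.inr j : Fin l ⊕ Fin l) = Sum.inr k'
      ∨ (Sum.inr k : Fin l ⊕ Fin l) = Sum.inr j' ∨ (Sum.inr k : Fin l ⊕ Fin l) = Sum.inr k' := by
    rcases h with h | h | h | h <;> simp [h]
  rw [show etav l j * etav l k * (etav l j' * etav l k' * v)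
      = (gen l (Sum.inr j) * gen l (Sum.inr k) * (gen l (Sum.inr j') * gen l (Sum.inr k'))) * v by
    simp [etav, mul_assoc], quad_zero _ _ _ _ hh, zero_mul]

lemma Lmul_apply (g x : Lam l) : Lmul l g x = g * x := rfl

lemma Lmul_zero : Lmul l (0 : Lam l) = 0 := LinearMap.ext fun x => zero_mul x

lemma Lmul_neg (g : Lam l) : Lmul l (-g) = -Lmul l g := LinearMap.ext fun x => neg_mul g x

variable {pd : (Fin l ⊕ Fin l) → Module.End ℂ (Lam l)}
  (hpd : ∀ a, IsContraction l a (pd a))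

include hpd

lemma pd_gen (a b : Fin l ⊕ Fin l) : pd a (gen l b) = if a = b then 1 else 0 :=
  (hpd a).2.1 b

lemma pd_mul (a b : Fin l ⊕ Fin l) (y : Lam l) :
    pd a (gen l b * y) = (if a = b then (1 : Lam l) else 0) * y - gen l b * pd a y := by
  have h := (hpd a).2.2 1 (fun _ => b) y
  simp only [List.ofFn_succ, List.ofFn_zero, List.prod_cons, List.prod_nil, mul_one,
    pow_one, neg_smul, one_smul] at h
  rw [h, pd_gen hpd, sub_eq_add_neg]

lemma pd_eta (a : Fin l ⊕ Fin l) (i : Fin l) (y : Lam l) (h : a ≠ Sum.inr i) :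
    pd a (etav l i * y) = -(etav l i * pd a y) := by
  rw [etav, pd_mul hpd, if_neg h, zero_mul, zero_sub]

lemma pd_eta2 (a : Fin l ⊕ Fin l) (i j : Fin l) (y : Lam l)
    (h1 : a ≠ Sum.inr i) (h2 : a ≠ Sum.inr j) :
    pd a (etav l i * etav l j * y) = etav l i * etav l j * pd a y := by
  rw [mul_assoc, pd_eta hpd _ _ _ h1, pd_eta hpd _ _ _ h2, mul_neg, neg_neg, mul_assoc]

end Aux

set_option maxHeartbeats 1000000

/-- for l ≥ 3, the odd operator D = H_{η₁η₂η₃}, which equals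
L_{η₂η₃}∘∂_{ξ₁} − L_{η₁η₃}∘∂_{ξ₂} + L_{η₁η₂}∘∂_{ξ₃}, satisfies D∘D = 0;
equivalently [H_{η₁η₂η₃}, H_{η₁η₂η₃}] = D∘D + D∘D = 0. This is the first
relation of Table 2.1.2 for h(0|2l). (Indices 0-based: η₁ ↦ 0, etc.) -/
theorem ham_relation1 (l : ℕ) (hl : 3 ≤ l)
    (pd : (Fin l ⊕ Fin l) → Module.End ℂ (Lam l))
    (hpd : ∀ a, IsContraction l a (pd a))
    (D : Module.End ℂ (Lam l))
    (hD : D = Ham l pd (etav l ⟨0, by omega⟩ * etav l ⟨1, by omega⟩ * etav l ⟨2, by omega⟩)) :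
    D = Lmul l (etav l ⟨1, by omega⟩ * etav l ⟨2, by omega⟩) ∘ₗ pd (Sum.inl ⟨0, by omega⟩)
        - Lmul l (etav l ⟨0, by omega⟩ * etav l ⟨2, by omega⟩) ∘ₗ pd (Sum.inl ⟨1, by omega⟩)
        + Lmul l (etav l ⟨0, by omega⟩ * etav l ⟨1, by omega⟩) ∘ₗ pd (Sum.inl ⟨2, by omega⟩) ∧
    D ∘ₗ D = 0 ∧ D ∘ₗ D + D ∘ₗ D = 0 := by
  have h0 : (0 : ℕ) < l := by omega
  have h1 : (1 : ℕ) < l := by omega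
  have h2 : (2 : ℕ) < l := by omega
  set i0 : Fin l := ⟨0, by omega⟩ with hi0
  set i1 : Fin l := ⟨1, by omega⟩ with hi1
  set i2 : Fin l := ⟨2, by omega⟩ with hi2
  set X0 : Module.End ℂ (Lam l) :=
    Lmul l (etav l i1 * etav l i2) ∘ₗ pd (Sum.inl i0) with hX0
  set X1 : Module.End ℂ (Lam l) :=
    Lmul l (etav l i0 * etav l i2) ∘ₗ pd (Sum.inl i1) with hX1
  set X2 : Module.End ℂ (Lam l) :=
    Lmul l (etav l i0 * etav l i1) ∘ₗ pd (Sum.inl i2) with hX2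
  have hne01 : i0 ≠ i1 := by simp [hi0, hi1, Fin.ext_iff]
  have hne02 : i0 ≠ i2 := by simp [hi0, hi2, Fin.ext_iff]
  have hne12 : i1 ≠ i2 := by simp [hi1, hi2, Fin.ext_iff]
  -- the value of pd on f = η0 η1 η2
  have hinl : ∀ i : Fin l, pd (Sum.inl i) (etav l i0 * etav l i1 * etav l i2) = 0 := by
    intro i
    have h : pd (Sum.inl i) (etav l i2) = 0 := by
      rw [etav, pd_gen hpd, if_neg (by simp)]
    rw [pd_eta2 hpd _ _ _ _ (by simp) (by simp), h, mul_zero]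
  have hinr : ∀ i : Fin l, pd (Sum.inr i) (etav l i0 * etav l i1 * etav l i2) =
      (if i = i0 then (1 : Lam l) else 0) * (etav l i1 * etav l i2)
      - etav l i0 * ((if i = i1 then (1 : Lam l) else 0) * etav l i2
        - etav l i1 * (if i = i2 then (1 : Lam l) else 0)) := by
    intro i
    rw [mul_assoc, etav, etav, etav, pd_mul hpd, pd_mul hpd, pd_gen hpd]
    simp only [Sum.inr.injEq]
  -- Part 1 : D = X0 - X1 + X2
  have part1 : D = X0 - X1 + X2 := by
    rw [hD, Ham]
    have hterm : ∀ i : Fin l,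
        (Lmul l (pd (Sum.inl i) (etav l i0 * etav l i1 * etav l i2)) ∘ₗ pd (Sum.inr i) +
         Lmul l (pd (Sum.inr i) (etav l i0 * etav l i1 * etav l i2)) ∘ₗ pd (Sum.inl i))
        = (if i = i0 then X0 else 0) + (if i = i1 then -X1 else 0)
          + (if i = i2 then X2 else 0) := by
      intro i
      rw [hinl i, hinr i, Lmul_zero, LinearMap.zero_comp, zero_add]
      by_cases e0 : i = i0
      · subst e0
        rw [if_pos rfl, if_neg hne01, if_neg hne02, if_pos rfl, if_neg hne01, if_neg hne02]
        simp [hX0]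
      · by_cases e1 : i = i1
        · subst e1
          rw [if_neg e0, if_pos rfl, if_neg hne12, if_neg e0, if_pos rfl, if_neg hne12]
          have : (0 : Lam l) * (etav l i1 * etav l i2)
              - etav l i0 * (1 * etav l i2 - etav l i1 * 0) = -(etav l i0 * etav l i2) := by
            simp
          rw [this]
          rw [Lmul_neg]
          simp [hX1]
        · by_cases e2 : i = i2
          · subst e2
            rw [if_neg e0, if_neg e1, if_pos rfl, if_neg e0, if_neg e1, if_pos rfl]
            have : (0 : Lam l) * (etav l i1 * etav l i2)
                - etav l i0 * (0 * etav l i2 - etav l i1 * 1) = etav l i0 * etav l i1 := by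
              simp
            rw [this]
            simp [hX2]
          · rw [if_neg e0, if_neg e1, if_neg e2, if_neg e0, if_neg e1, if_neg e2]
            have : (0 : Lam l) * (etav l i1 * etav l i2)
                - etav l i0 * (0 * etav l i2 - etav l i1 * 0) = 0 := by simp
            rw [this, Lmul_zero, LinearMap.zero_comp]
            simp
    rw [Finset.sum_congr rfl (fun i _ => hterm i)]
    simp only [Finset.sum_add_distrib, Finset.sum_ite_eq', Finset.mem_univ, if_true]
    abel
  -- Part 2 : D ∘ D = 0
  have hDy : ∀ y : Lam l, D y = etav l i1 * etav l i2 * pd (Sum.inl i0) y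
      - etav l i0 * etav l i2 * pd (Sum.inl i1) y
      + etav l i0 * etav l i1 * pd (Sum.inl i2) y := by
    intro y
    rw [part1]
    simp [hX0, hX1, hX2, Lmul_apply]
  have hDD : D ∘ₗ D = 0 := by
    apply LinearMap.ext; intro y
    rw [LinearMap.comp_apply, LinearMap.zero_apply, hDy (D y), hDy y]
    simp only [map_sub, map_add, ne_eq, pd_eta2 hpd, reduceCtorEq, not_false_eq_true]
    simp only [mul_sub, mul_add]
    rw [quadz i1 i2 i1 i2 (Or.inl rfl),
      quadz i1 i2 i0 i2 (Or.inr (Or.inr (Or.inr rfl))),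
      quadz i1 i2 i0 i1 (Or.inr (Or.inl rfl)),
      quadz i0 i2 i1 i2 (Or.inr (Or.inr (Or.inr rfl))),
      quadz i0 i2 i0 i2 (Or.inl rfl),
      quadz i0 i2 i0 i1 (Or.inl rfl),
      quadz i0 i1 i1 i2 (Or.inr (Or.inr (Or.inl rfl))),
      quadz i0 i1 i0 i2 (Or.inl rfl),
      quadz i0 i1 i0 i1 (Or.inl rfl)]
    simp
  exact ⟨part1, hDD, by rw [hDD]; simp⟩
end

section
/- Let l ≥ 4 and set X := H_{ξ₃η₄} = L_{η₄}∘∂_{η₃} − L_{ξ₃}∘∂_{ξ₄} (even) and D := H_{η₁η₂η₃} (odd). Then the commutator [X, D] = X∘D − D∘X equals H_{η₁η₂η₄}, and [X, [X, D]] = 0. This realizes the relation (ad ξ₃η₄)²(η₁η₂η₃) = 0 between the generators of n₊ of o(2l) and the extra generator Y = H_{η₁η₂η₃} of h(0|2l) stated in the paper (§2.1.2), together with the intermediate value of the first bracket. -/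
/-!
`X` is an even derivation of Λ sending generators to linear combinations of generators, while
`H_{η₁η₂η₃}` and `H_{η₁η₂η₄}` are odd derivations, being sums of operators `L_u ∘ ∂` with `u`
of even degree. The commutator of such an even derivation with an odd one is again an odd
derivation, and a derivation is determined by its values on generators. Both identities thus
reduce to evaluating the operators on one generator `ι v`, which the contraction rule
`∂_a (ι v * y) = v a • y - ι v * ∂_a y` makes a short computation.
-/

namespace ExteriorAlgebra

variable (R M : Type*) [CommRing R] [AddCommGroup M] [Module R M]

/-- `ε = 1` gives the even and `ε = -1` the odd derivations; testing the graded Leibniz rule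
against generators only is enough, and avoids any reference to the grading. -/
def superDerivations (ε : R) : Submodule R (Module.End R (ExteriorAlgebra R M)) where
  carrier := {T | T 1 = 0 ∧ ∀ m y, T (ι R m * y) = T (ι R m) * y + ε • (ι R m * T y)}
  add_mem' := by
    rintro S T ⟨hS1, hS⟩ ⟨hT1, hT⟩
    refine ⟨by simp [hS1, hT1], fun m y => ?_⟩
    simp only [LinearMap.add_apply, hS, hT, add_mul, mul_add, smul_add]
    abel
  zero_mem' := by simp
  smul_mem' := by
    rintro r T ⟨hT1, hT⟩
    refine ⟨by simp [hT1], fun m y => ?_⟩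
    simp only [LinearMap.smul_apply, hT, smul_add, smul_mul_assoc, mul_smul_comm, smul_comm r ε]

variable {R M} {ε : R} {S T : Module.End R (ExteriorAlgebra R M)}

theorem superDerivations.map_mul (hS : S ∈ superDerivations R M 1) (x y : ExteriorAlgebra R M) :
    S (x * y) = S x * y + x * S y := by
  induction x using ExteriorAlgebra.induction generalizing y with
  | algebraMap r => simp [Algebra.algebraMap_eq_smul_one, hS.1]
  | ι m => simpa using hS.2 m y
  | mul a b ha hb => rw [mul_assoc, ha, hb, ha b]; noncomm_ring
  | add a b ha hb => simp only [add_mul, map_add, ha, hb]; abel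

theorem superDerivations.eq_zero (hT : T ∈ superDerivations R M ε) (h : ∀ m, T (ι R m) = 0) :
    T = 0 := by
  have h_mul : ∀ x y, T y = 0 → T (x * y) = 0 := by
    intro x
    induction x using ExteriorAlgebra.induction with
    | algebraMap r => intro y hy; simp [Algebra.algebraMap_eq_smul_one, hy]
    | ι m => intro y hy; rw [hT.2, h, hy]; simp
    | mul a b ha hb => intro y hy; rw [mul_assoc]; exact ha _ (hb _ hy)
    | add a b ha hb => intro y hy; rw [add_mul, map_add, ha y hy, hb y hy, add_zero]
  exact LinearMap.ext fun x => by simpa using h_mul x 1 hT.1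

theorem superDerivations.ext (hS : S ∈ superDerivations R M ε) (hT : T ∈ superDerivations R M ε)
    (h : ∀ m, S (ι R m) = T (ι R m)) : S = T :=
  sub_eq_zero.mp <| superDerivations.eq_zero (sub_mem hS hT) fun m => by simp [h]

theorem mulLeft_comp_mem_superDerivations {δ : R} {u : ExteriorAlgebra R M}
    (hT : T ∈ superDerivations R M δ) (hu : ∀ m, u * ι R m = ε • (ι R m * u)) :
    LinearMap.mulLeft R u ∘ₗ T ∈ superDerivations R M (ε * δ) := by
  refine ⟨by simp [hT.1], fun m y => ?_⟩
  simp only [LinearMap.comp_apply, LinearMap.mulLeft_apply, hT.2, mul_add, mul_smul_comm,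
    ← mul_assoc, hu, smul_mul_assoc, smul_smul, mul_comm δ ε]

/-- `hSι` is what lets the Leibniz rule of `T` be applied to `S (ι R m) * y`. -/
theorem commutator_mem_superDerivations (hS : S ∈ superDerivations R M 1)
    (hSι : ∀ m, S (ι R m) ∈ LinearMap.range (ι R)) (hT : T ∈ superDerivations R M ε) :
    S ∘ₗ T - T ∘ₗ S ∈ superDerivations R M ε := by
  refine ⟨by simp [hS.1, hT.1], fun m y => ?_⟩
  obtain ⟨n, hn⟩ := hSι m
  simp only [LinearMap.sub_apply, LinearMap.comp_apply, hT.2 m, hS.2 m, map_add, map_smul,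
    superDerivations.map_mul hS, one_smul]
  rw [← hn, hT.2 n]
  simp only [mul_sub, sub_mul, smul_sub, smul_add]
  abel

theorem ι_mul_ι_eq_neg (a m : M) : ι R a * ι R m = -(ι R m * ι R a) :=
  eq_neg_of_add_eq_zero_left (ι_add_mul_swap a m)

theorem mulLeft_ι_comp_mem_superDerivations (hT : T ∈ superDerivations R M (-1)) (n : M) :
    LinearMap.mulLeft R (ι R n) ∘ₗ T ∈ superDerivations R M 1 := by
  have h := mulLeft_comp_mem_superDerivations (u := ι R n) hT fun m => by
    rw [ι_mul_ι_eq_neg, neg_one_smul]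
  rwa [neg_one_mul, neg_neg] at h

theorem mulLeft_ι_mul_ι_comp_mem_superDerivations (hT : T ∈ superDerivations R M (-1))
    (n n' : M) : LinearMap.mulLeft R (ι R n * ι R n') ∘ₗ T ∈ superDerivations R M (-1) := by
  have h := mulLeft_comp_mem_superDerivations (ε := 1) hT fun m => by
    rw [one_smul, mul_assoc, ι_mul_ι_eq_neg n', mul_neg, ← mul_assoc, ι_mul_ι_eq_neg n, neg_mul,
      neg_neg, mul_assoc]
  rwa [one_mul] at h

end ExteriorAlgebra

open ExteriorAlgebra

section Contraction

variable {l : ℕ} {a : Fin l ⊕ Fin l} {D : Module.End ℂ (Lam l)}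

theorem ι_eq_sum_gen (v : Fin l ⊕ Fin l → ℂ) : ι ℂ v = ∑ b, v b • gen l b := by
  conv_lhs => rw [pi_eq_sum_univ' v]
  simp only [map_sum, map_smul, gen]

theorem IsContraction.map_gen_mul (hD : IsContraction l a D) (b : Fin l ⊕ Fin l) (y : Lam l) :
    D (gen l b * y) = D (gen l b) * y + (-1 : ℂ) • (gen l b * D y) := by
  simpa using hD.2.2 1 (fun _ => b) y

theorem IsContraction.mem_superDerivations (hD : IsContraction l a D) :
    D ∈ superDerivations ℂ _ (-1) := by
  refine ⟨hD.1, fun v y => ?_⟩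
  simp only [ι_eq_sum_gen v, Finset.sum_mul, map_sum, smul_mul_assoc, map_smul,
    hD.map_gen_mul, Finset.smul_sum, smul_add, Finset.sum_add_distrib, smul_comm (v _)]

theorem IsContraction.map_ι (hD : IsContraction l a D) (v : Fin l ⊕ Fin l → ℂ) :
    D (ι ℂ v) = v a • 1 := by
  simp only [ι_eq_sum_gen v, map_sum, map_smul, hD.2.1, smul_ite, smul_zero, Finset.sum_ite_eq,
    Finset.mem_univ, if_true]

theorem IsContraction.map_ι_mul (hD : IsContraction l a D) (v : Fin l ⊕ Fin l → ℂ) (y : Lam l) :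
    D (ι ℂ v * y) = v a • y - ι ℂ v * D y := by
  rw [hD.mem_superDerivations.2, hD.map_ι, smul_mul_assoc, one_mul, neg_one_smul, sub_eq_add_neg]

end Contraction

section Hamiltonian

variable {l : ℕ} {pd : (Fin l ⊕ Fin l) → Module.End ℂ (Lam l)}

theorem Ham_xiv_mul_etav (hpd : ∀ a, IsContraction l a (pd a)) (k m : Fin l) :
    Ham l pd (xiv l k * etav l m) =
      Lmul l (etav l m) ∘ₗ pd (Sum.inr k) - Lmul l (xiv l k) ∘ₗ pd (Sum.inl m) := by
  refine LinearMap.ext fun x => ?_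
  simp [Ham, xiv, etav, gen, Lmul, (hpd _).map_ι_mul, (hpd _).map_ι, Pi.single_apply,
    Finset.sum_add_distrib, sub_eq_add_neg]

theorem Ham_etav_mul_etav_mul_etav (hpd : ∀ a, IsContraction l a (pd a)) (i j k : Fin l) :
    Ham l pd (etav l i * etav l j * etav l k) =
      Lmul l (etav l j * etav l k) ∘ₗ pd (Sum.inl i)
        - Lmul l (etav l i * etav l k) ∘ₗ pd (Sum.inl j)
        + Lmul l (etav l i * etav l j) ∘ₗ pd (Sum.inl k) := by
  refine LinearMap.ext fun x => ?_
  simp [Ham, etav, gen, Lmul, mul_assoc, (hpd _).map_ι_mul, (hpd _).map_ι, Pi.single_apply,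
    Finset.sum_add_distrib, sub_eq_add_neg, add_mul, mul_add, mul_ite, ite_mul, add_assoc,
    neg_add_eq_sub]

theorem Ham_xiv_mul_etav_mem_superDerivations (hpd : ∀ a, IsContraction l a (pd a))
    (k m : Fin l) : Ham l pd (xiv l k * etav l m) ∈ superDerivations ℂ _ 1 := by
  rw [Ham_xiv_mul_etav hpd]
  exact sub_mem (mulLeft_ι_comp_mem_superDerivations (hpd _).mem_superDerivations _)
    (mulLeft_ι_comp_mem_superDerivations (hpd _).mem_superDerivations _)

theorem Ham_xiv_mul_etav_map_ι_mem_range (hpd : ∀ a, IsContraction l a (pd a)) (k m : Fin l)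
    (v : Fin l ⊕ Fin l → ℂ) :
    Ham l pd (xiv l k * etav l m) (ι ℂ v) ∈ LinearMap.range (ι ℂ) := by
  rw [Ham_xiv_mul_etav hpd]
  simp only [LinearMap.sub_apply, LinearMap.comp_apply, Lmul, LinearMap.mulLeft_apply,
    (hpd _).map_ι, mul_smul_comm, mul_one, xiv, etav, gen]
  exact sub_mem (Submodule.smul_mem _ _ (LinearMap.mem_range_self _ _))
    (Submodule.smul_mem _ _ (LinearMap.mem_range_self _ _))

theorem Ham_etav_mul_etav_mul_etav_mem_superDerivations (hpd : ∀ a, IsContraction l a (pd a))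
    (i j k : Fin l) :
    Ham l pd (etav l i * etav l j * etav l k) ∈ superDerivations ℂ _ (-1) := by
  rw [Ham_etav_mul_etav_mul_etav hpd]
  refine add_mem (sub_mem ?_ ?_) ?_ <;>
    exact mulLeft_ι_mul_ι_comp_mem_superDerivations (hpd _).mem_superDerivations _ _

theorem Ham_xiv_mul_etav_commutator_mem_superDerivations (hpd : ∀ a, IsContraction l a (pd a))
    (k m i j n : Fin l) :
    Ham l pd (xiv l k * etav l m) ∘ₗ Ham l pd (etav l i * etav l j * etav l n)
      - Ham l pd (etav l i * etav l j * etav l n) ∘ₗ Ham l pd (xiv l k * etav l m)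
      ∈ superDerivations ℂ _ (-1) :=
  commutator_mem_superDerivations (Ham_xiv_mul_etav_mem_superDerivations hpd k m)
    (Ham_xiv_mul_etav_map_ι_mem_range hpd k m)
    (Ham_etav_mul_etav_mul_etav_mem_superDerivations hpd i j n)

theorem Ham_xiv_mul_etav_commutator_etav_mul_etav_mul_etav (hpd : ∀ a, IsContraction l a (pd a))
    {i j k : Fin l} (hik : i ≠ k) (hjk : j ≠ k) (m : Fin l) :
    Ham l pd (xiv l k * etav l m) ∘ₗ Ham l pd (etav l i * etav l j * etav l k)
      - Ham l pd (etav l i * etav l j * etav l k) ∘ₗ Ham l pd (xiv l k * etav l m)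
      = Ham l pd (etav l i * etav l j * etav l m) := by
  refine superDerivations.ext (Ham_xiv_mul_etav_commutator_mem_superDerivations hpd k m i j k)
    (Ham_etav_mul_etav_mul_etav_mem_superDerivations hpd i j m) fun v => ?_
  rw [Ham_xiv_mul_etav hpd, Ham_etav_mul_etav_mul_etav hpd, Ham_etav_mul_etav_mul_etav hpd]
  simp [xiv, etav, gen, Lmul, (hpd _).map_ι, (hpd _).map_ι_mul, hik, hjk, mul_add, sub_eq_add_neg,
    ι_mul_ι_eq_neg (R := ℂ) (Pi.single (Sum.inr m) 1 : Fin l ⊕ Fin l → ℂ)]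

theorem Ham_xiv_mul_etav_commutator_etav_mul_etav_mul_etav_eq_zero
    (hpd : ∀ a, IsContraction l a (pd a)) {i j k m : Fin l} (hik : i ≠ k) (hjk : j ≠ k)
    (hmk : m ≠ k) :
    Ham l pd (xiv l k * etav l m) ∘ₗ Ham l pd (etav l i * etav l j * etav l m)
      - Ham l pd (etav l i * etav l j * etav l m) ∘ₗ Ham l pd (xiv l k * etav l m) = 0 := by
  refine superDerivations.eq_zero
    (Ham_xiv_mul_etav_commutator_mem_superDerivations hpd k m i j m) fun v => ?_
  rw [Ham_xiv_mul_etav hpd, Ham_etav_mul_etav_mul_etav hpd]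
  simp [xiv, etav, gen, Lmul, (hpd _).map_ι, (hpd _).map_ι_mul, hik, hjk, hmk]

end Hamiltonian

/-- for l ≥ 4, with X = H_{ξ₃η₄} = L_{η₄}∘∂_{η₃} − L_{ξ₃}∘∂_{ξ₄}
(even) and D = H_{η₁η₂η₃} (odd), the commutator [X, D] = X∘D − D∘X equals
H_{η₁η₂η₄}, and [X, [X, D]] = 0, realizing the relation
(ad ξ₃η₄)²(η₁η₂η₃) = 0 of §2.1.2. (Indices 0-based.) -/
theorem ham_ad_squared (l : ℕ) (hl : 4 ≤ l)
    (pd : (Fin l ⊕ Fin l) → Module.End ℂ (Lam l))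
    (hpd : ∀ a, IsContraction l a (pd a))
    (X D : Module.End ℂ (Lam l))
    (hX : X = Ham l pd (xiv l ⟨2, by omega⟩ * etav l ⟨3, by omega⟩))
    (hD : D = Ham l pd (etav l ⟨0, by omega⟩ * etav l ⟨1, by omega⟩ * etav l ⟨2, by omega⟩)) :
    X = Lmul l (etav l ⟨3, by omega⟩) ∘ₗ pd (Sum.inr ⟨2, by omega⟩)
        - Lmul l (xiv l ⟨2, by omega⟩) ∘ₗ pd (Sum.inl ⟨3, by omega⟩) ∧
    X ∘ₗ D - D ∘ₗ X =
      Ham l pd (etav l ⟨0, by omega⟩ * etav l ⟨1, by omega⟩ * etav l ⟨3, by omega⟩) ∧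
    X ∘ₗ (X ∘ₗ D - D ∘ₗ X) - (X ∘ₗ D - D ∘ₗ X) ∘ₗ X = 0 := by
  have h02 : (⟨0, by omega⟩ : Fin l) ≠ ⟨2, by omega⟩ := by simp
  have h12 : (⟨1, by omega⟩ : Fin l) ≠ ⟨2, by omega⟩ := by simp
  have h32 : (⟨3, by omega⟩ : Fin l) ≠ ⟨2, by omega⟩ := by simp
  have hXD := Ham_xiv_mul_etav_commutator_etav_mul_etav_mul_etav hpd h02 h12 ⟨3, by omega⟩
  subst hX hD
  exact ⟨Ham_xiv_mul_etav hpd _ _, hXD,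
    hXD ▸ Ham_xiv_mul_etav_commutator_etav_mul_etav_mul_etav_eq_zero hpd h02 h12 h32⟩
end
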